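/- For every integer n ≥ 1, ∫₀^{2π} βₙ^{(o)}(θ)·sin(nθ) dθ = 1/2, and likewise ∫₀^{2π} βₙ^{(e)}(θ)·cos(nθ) dθ = 1/2. -/

import Mathlib

open Real

/-- Coolness function on the circle:
`β^{[p,q]}(θ) = 2 sin((θ-p)/2) sin((q-θ)/2) / sin((q-p)/2)` on `[p,q]`, `0` outside. -/
noncomputable def betaCirc (p q θ : ℝ) : ℝ :=
  if θ ∈ Set.Icc p q then
    2 * Real.sin ((θ - p) / 2) * Real.sin ((q - θ) / 2) / Real.sin ((q - p) / 2)
  else 0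

/-- The `2π`-periodic extension `β̃^{[p,q]}(θ) = Σ_{j∈ℤ} β^{[p,q]}(θ + 2πj)`. -/
noncomputable def betaTilde (p q θ : ℝ) : ℝ :=
  ∑' j : ℤ, betaCirc p q (θ + 2 * π * j)

/-- The normalization constant `Aₙ`: `A₁ = 1/(2π)` and `Aₙ = tan(π/(2n))(n²-1)/8` for `n ≥ 2`. -/
noncomputable def Acoef (n : ℕ) : ℝ :=
  if n = 1 then 1 / (2 * π) else Real.tan (π / (2 * n)) * ((n : ℝ) ^ 2 - 1) / 8

/-- The weight function `βₙ^{(o)}(θ) = Aₙ Σ_{k=1}^{2n} (-1)^{k-1} β^{[(k-1)π/n, kπ/n]}(θ)`,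
extended `2π`-periodically to all of `ℝ`. -/
noncomputable def betaO (n : ℕ) (θ : ℝ) : ℝ :=
  Acoef n * ∑ k ∈ Finset.Icc 1 (2 * n),
    (-1 : ℝ) ^ (k - 1) * betaTilde (((k : ℝ) - 1) * π / n) ((k : ℝ) * π / n) θ

section helpers
open MeasureTheory intervalIntegral

lemma betaCirc_right (p q : ℝ) : betaCirc p q q = 0 := by
  simp [betaCirc]

lemma betaCirc_left (p q : ℝ) : betaCirc p q p = 0 := by
  simp [betaCirc]

lemma betaCirc_notmem {p q θ : ℝ} (h : θ ∉ Set.Icc p q) : betaCirc p q θ = 0 := by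
  simp [betaCirc, h]

lemma betaCirc_mul_intervalIntegrable (p q a b : ℝ) (g : ℝ → ℝ) (hg : Continuous g) :
    IntervalIntegrable (fun θ => betaCirc p q θ * g θ) volume a b := by
  have hcont : Continuous (fun θ : ℝ =>
      2 * Real.sin ((θ - p) / 2) * Real.sin ((q - θ) / 2) / Real.sin ((q - p) / 2) * g θ) := by
    fun_prop
  have heq : (fun θ => betaCirc p q θ * g θ)
      = Set.indicator (Set.Icc p q) (fun θ =>
        2 * Real.sin ((θ - p) / 2) * Real.sin ((q - θ) / 2) / Real.sin ((q - p) / 2) * g θ) := by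
    funext θ
    by_cases h : θ ∈ Set.Icc p q <;> simp [betaCirc, h]
  rw [heq, intervalIntegrable_iff, MeasureTheory.IntegrableOn,
    MeasureTheory.integrable_indicator_iff measurableSet_Icc,
    MeasureTheory.IntegrableOn, Measure.restrict_restrict measurableSet_Icc]
  exact (hcont.integrableOn_Icc).mono_set Set.inter_subset_left

lemma betaTilde_eq_betaCirc {p q θ : ℝ} (hp : 0 ≤ p) (hq : q ≤ 2 * π)
    (h0 : 0 ≤ θ) (h2 : θ ≤ 2 * π) : betaTilde p q θ = betaCirc p q θ := by
  have key : betaTilde p q θ = betaCirc p q (θ + 2 * π * ((0 : ℤ) : ℝ)) := by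
    apply tsum_eq_single
    intro j hj
    rcases lt_or_gt_of_ne hj with hneg | hpos
    · have hj' : j ≤ -1 := by omega
      have hj1 : (j : ℝ) ≤ -1 := by exact_mod_cast hj'
      have hle : θ + 2 * π * j ≤ 0 := by nlinarith [Real.pi_pos]
      by_cases hm : θ + 2 * π * j ∈ Set.Icc p q
      · have heq : θ + 2 * π * j = p := le_antisymm (le_trans hle hp) hm.1
        rw [heq]; exact betaCirc_left p q
      · exact betaCirc_notmem hm
    · have hj1 : (1 : ℝ) ≤ (j : ℝ) := by exact_mod_cast hpos
      have hle : 2 * π ≤ θ + 2 * π * j := by nlinarith [Real.pi_pos]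
      by_cases hm : θ + 2 * π * j ∈ Set.Icc p q
      · have heq : θ + 2 * π * j = q := le_antisymm hm.2 (le_trans hq hle)
        rw [heq]; exact betaCirc_right p q
      · exact betaCirc_notmem hm
  rw [key]; norm_num

lemma betaTilde_periodic (p q : ℝ) : Function.Periodic (betaTilde p q) (2 * π) := by
  intro θ
  unfold betaTilde
  rw [← (Equiv.addRight (1 : ℤ)).tsum_eq (fun j : ℤ => betaCirc p q (θ + 2 * π * j))]
  exact tsum_congr fun j => by push_cast [Equiv.coe_addRight]; ring_nf

lemma two_sin_mul_sin (a b : ℝ) :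
    2 * Real.sin a * Real.sin b = Real.cos (a - b) - Real.cos (a + b) := by
  rw [Real.cos_sub, Real.cos_add]; ring

lemma cos_nat_pi (k : ℕ) : Real.cos ((k : ℝ) * π) = (-1) ^ k := by
  simpa using Real.cos_nat_mul_pi_sub 0 k

/-- generic antiderivative evaluation for the product integrand, `N ∉ {0, ±1}`. -/
lemma integral_block (N m c p q : ℝ) (hN0 : N ≠ 0) (hNp : N + 1 ≠ 0) (hNm : N - 1 ≠ 0)
    (hmpq : p + q = 2 * m) (hcpq : q - p = 2 * c) :
    (∫ x in p..q, 2 * Real.sin ((x - p) / 2) * Real.sin ((q - x) / 2) * Real.sin (N * x))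
    = (-(Real.cos (N * q + (q - m)) / (2 * (N + 1)))
        - Real.cos (N * q - (q - m)) / (2 * (N - 1)) + Real.cos c * Real.cos (N * q) / N)
      - (-(Real.cos (N * p + (p - m)) / (2 * (N + 1)))
        - Real.cos (N * p - (p - m)) / (2 * (N - 1)) + Real.cos c * Real.cos (N * p) / N) := by
  refine intervalIntegral.integral_eq_sub_of_hasDerivAt (f := fun y : ℝ =>
      -(Real.cos (N * y + (y - m)) / (2 * (N + 1)))
        - Real.cos (N * y - (y - m)) / (2 * (N - 1)) + Real.cos c * Real.cos (N * y) / N)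
      (fun x _ => ?_) ?_
  · have h1 : HasDerivAt (fun y : ℝ => N * y + (y - m)) (N * 1 + 1) x :=
      ((hasDerivAt_id x).const_mul N).add ((hasDerivAt_id x).sub_const m)
    have h2 : HasDerivAt (fun y : ℝ => N * y - (y - m)) (N * 1 - 1) x :=
      ((hasDerivAt_id x).const_mul N).sub ((hasDerivAt_id x).sub_const m)
    have h3 : HasDerivAt (fun y : ℝ => N * y) (N * 1) x := (hasDerivAt_id x).const_mul N
    have hF := (((h1.cos.div_const (2 * (N + 1))).neg.sub (h2.cos.div_const (2 * (N - 1)))).add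
      ((h3.cos.const_mul (Real.cos c)).div_const N))
    convert hF using 1
    · rfl
    have e1 : (x - p) / 2 - (q - x) / 2 = x - m := by linarith
    have e2 : (x - p) / 2 + (q - x) / 2 = c := by linarith
    rw [two_sin_mul_sin, e1, e2, Real.sin_add (N*x) (x - m), Real.sin_sub (N*x) (x - m)]
    field_simp
    ring
  · apply Continuous.intervalIntegrable
    fun_prop


/-- Per-interval integral, `n ≥ 2`. -/
lemma per_interval_ge2 (n k : ℕ) (hn : 2 ≤ n) (hk : 1 ≤ k) :
    (∫ θ in (((k : ℝ) - 1) * π / n)..((k : ℝ) * π / n),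
      2 * Real.sin ((θ - ((k : ℝ) - 1) * π / n) / 2) * Real.sin (((k : ℝ) * π / n - θ) / 2)
        * Real.sin ((n : ℝ) * θ))
    = (-1 : ℝ) ^ (k - 1) * (2 * Real.cos (π / (2 * n)) / ((n : ℝ) * ((n : ℝ) ^ 2 - 1))) := by
  obtain ⟨j, rfl⟩ : ∃ j, k = j + 1 := ⟨k - 1, (Nat.succ_pred_eq_of_pos hk).symm⟩
  have hN2 : (2 : ℝ) ≤ (n : ℝ) := by exact_mod_cast hn
  have hN0 : (n : ℝ) ≠ 0 := by linarith
  have hNp : (n : ℝ) + 1 ≠ 0 := by linarith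
  have hNm : (n : ℝ) - 1 ≠ 0 := by linarith
  rw [integral_block (n : ℝ) ((2 * ((j + 1 : ℕ) : ℝ) - 1) * π / (2 * n)) (π / (2 * n))
      (((((j + 1 : ℕ) : ℝ)) - 1) * π / n) (((j + 1 : ℕ) : ℝ) * π / n)
      hN0 hNp hNm (by field_simp; ring) (by field_simp; ring)]
  have a1 : (n : ℝ) * (((j + 1 : ℕ) : ℝ) * π / n) + (((j + 1 : ℕ) : ℝ) * π / n
      - (2 * ((j + 1 : ℕ) : ℝ) - 1) * π / (2 * n)) = ((j + 1 : ℕ) : ℝ) * π + π / (2 * n) := by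
    field_simp; ring
  have a2 : (n : ℝ) * (((j + 1 : ℕ) : ℝ) * π / n) - (((j + 1 : ℕ) : ℝ) * π / n
      - (2 * ((j + 1 : ℕ) : ℝ) - 1) * π / (2 * n)) = ((j + 1 : ℕ) : ℝ) * π - π / (2 * n) := by
    field_simp; ring
  have a3 : (n : ℝ) * (((j + 1 : ℕ) : ℝ) * π / n) = ((j + 1 : ℕ) : ℝ) * π := by
    field_simp
  have a4 : (n : ℝ) * ((((j + 1 : ℕ) : ℝ) - 1) * π / n) + ((((j + 1 : ℕ) : ℝ) - 1) * π / n
      - (2 * ((j + 1 : ℕ) : ℝ) - 1) * π / (2 * n)) = (j : ℝ) * π - π / (2 * n) := by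
    push_cast; field_simp; ring
  have a5 : (n : ℝ) * ((((j + 1 : ℕ) : ℝ) - 1) * π / n) - ((((j + 1 : ℕ) : ℝ) - 1) * π / n
      - (2 * ((j + 1 : ℕ) : ℝ) - 1) * π / (2 * n)) = (j : ℝ) * π + π / (2 * n) := by
    push_cast; field_simp; ring
  have a6 : (n : ℝ) * ((((j + 1 : ℕ) : ℝ) - 1) * π / n) = (j : ℝ) * π := by
    push_cast; field_simp; ring
  rw [a1, a2, a3, a4, a5, a6]
  simp only [Real.cos_add, Real.cos_sub, cos_nat_pi, Real.sin_nat_mul_pi, Nat.add_sub_cancel]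
  simp only [pow_succ]
  have hprod : -(n : ℝ) + (n : ℝ) ^ 3 ≠ 0 := by
    have he : -(n : ℝ) + (n : ℝ) ^ 3 = (n : ℝ) * ((n : ℝ) - 1) * ((n : ℝ) + 1) := by ring
    rw [he]; exact mul_ne_zero (mul_ne_zero hN0 hNm) hNp
  have hx : (-(n : ℝ) + (n : ℝ) ^ 3) * (-(n : ℝ) + (n : ℝ) ^ 3)⁻¹ = 1 := mul_inv_cancel₀ hprod
  field_simp [hprod]
  have hE : (-1 + (n : ℝ) ^ 2) * (-1 + (n : ℝ) ^ 2)⁻¹ = 1 := mul_inv_cancel₀ (by nlinarith)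
  linear_combination (-(Real.cos (π / (2 * n)) * (-1 : ℝ) ^ j * 4)) * hE

lemma per_interval_one (k : ℕ) (hk : 1 ≤ k) :
    (∫ θ in (((k : ℝ) - 1) * π)..((k : ℝ) * π),
      2 * Real.sin ((θ - ((k : ℝ) - 1) * π) / 2) * Real.sin (((k : ℝ) * π - θ) / 2)
        * Real.sin θ)
    = (-1 : ℝ) ^ (k - 1) * (π / 2) := by
  obtain ⟨j, rfl⟩ : ∃ j, k = j + 1 := ⟨k - 1, (Nat.succ_pred_eq_of_pos hk).symm⟩
  set m : ℝ := (2 * ((j + 1 : ℕ) : ℝ) - 1) * π / 2 with hm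
  have main : (∫ θ in (((j + 1 : ℕ) : ℝ) - 1) * π..((j + 1 : ℕ) : ℝ) * π,
      2 * Real.sin ((θ - (((j + 1 : ℕ) : ℝ) - 1) * π) / 2)
        * Real.sin ((((j + 1 : ℕ) : ℝ) * π - θ) / 2) * Real.sin θ)
      = (-(Real.cos (((j + 1 : ℕ) : ℝ) * π + (((j + 1 : ℕ) : ℝ) * π - m)) / 4)
          + Real.sin m * (((j + 1 : ℕ) : ℝ) * π) / 2)
        - (-(Real.cos ((((j + 1 : ℕ) : ℝ) - 1) * π + ((((j + 1 : ℕ) : ℝ) - 1) * π - m)) / 4)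
          + Real.sin m * ((((j + 1 : ℕ) : ℝ) - 1) * π) / 2) := by
    refine intervalIntegral.integral_eq_sub_of_hasDerivAt (f := fun y : ℝ =>
        -(Real.cos (y + (y - m)) / 4) + Real.sin m * y / 2) (fun x _ => ?_) ?_
    · have h1 : HasDerivAt (fun y : ℝ => y + (y - m)) (1 + 1) x :=
        (hasDerivAt_id x).add ((hasDerivAt_id x).sub_const m)
      have hF := ((h1.cos.div_const 4).neg.add
        (((hasDerivAt_id x).const_mul (Real.sin m)).div_const 2))
      convert hF using 1
      · rfl
      have e1 : (x - (((j + 1 : ℕ) : ℝ) - 1) * π) / 2 - ((((j + 1 : ℕ) : ℝ) * π - x)) / 2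
          = x - m := by rw [hm]; push_cast; ring
      have e2 : (x - (((j + 1 : ℕ) : ℝ) - 1) * π) / 2 + ((((j + 1 : ℕ) : ℝ) * π - x)) / 2
          = π / 2 := by push_cast; ring
      rw [two_sin_mul_sin, e1, e2, Real.cos_pi_div_two, Real.sin_add x (x - m)]
      rw [show Real.sin m = Real.sin x * Real.cos (x - m) - Real.cos x * Real.sin (x - m) from by
        rw [← Real.sin_sub]; ring_nf]
      ring
    · apply Continuous.intervalIntegrable; fun_prop
  rw [main]
  have b1 : ((j + 1 : ℕ) : ℝ) * π + (((j + 1 : ℕ) : ℝ) * π - m) = ((j + 1 : ℕ) : ℝ) * π + π / 2 := by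
    rw [hm]; push_cast; ring
  have b2 : (((j + 1 : ℕ) : ℝ) - 1) * π + ((((j + 1 : ℕ) : ℝ) - 1) * π - m) = (j : ℝ) * π - π / 2 := by
    rw [hm]; push_cast; ring
  have b3 : Real.sin m = (-1 : ℝ) ^ j := by
    rw [hm, show (2 * ((j + 1 : ℕ) : ℝ) - 1) * π / 2 = (j : ℝ) * π + π / 2 from by push_cast; ring,
      Real.sin_add, Real.sin_nat_mul_pi, Real.cos_pi_div_two, Real.sin_pi_div_two, cos_nat_pi]
    ring
  rw [b1, b2, b3, Real.cos_add, Real.cos_sub, Real.cos_pi_div_two, Real.sin_pi_div_two,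
    Real.sin_nat_mul_pi, Real.sin_nat_mul_pi, Nat.add_sub_cancel]
  push_cast
  ring

end helpers

section main
open MeasureTheory intervalIntegral

lemma part1 (n : ℕ) (hn : 1 ≤ n) :
    (∫ θ in (0:ℝ)..(2*π), betaO n θ * Real.sin ((n:ℝ) * θ)) = 1/2 := by
  have hπ := Real.pi_pos
  have hN1 : (1:ℝ) ≤ (n:ℝ) := by exact_mod_cast hn
  have hN0 : (n:ℝ) ≠ 0 := by linarith
  have hNpos : (0:ℝ) < n := by linarith
  set v : ℝ := if n = 1 then π/2 else 2 * Real.cos (π/(2*n)) / ((n:ℝ) * ((n:ℝ)^2 - 1)) with hv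
  set S : ℝ := Real.sin (π/(2*n)) with hS
  have hSpos : 0 < S := by
    rw [hS]
    apply Real.sin_pos_of_pos_of_lt_pi
    · positivity
    · rw [div_lt_iff₀ (by positivity)]
      nlinarith
  -- key per-interval evaluation
  have hkey : ∀ k ∈ Finset.Icc 1 (2*n),
      (∫ θ in (0:ℝ)..(2*π), betaCirc (((k:ℝ)-1)*π/n) ((k:ℝ)*π/n) θ * Real.sin ((n:ℝ)*θ))
      = ((-1:ℝ)^(k-1) * v) / S := by
    intro k hk
    obtain ⟨hk1, hk2⟩ := Finset.mem_Icc.mp hk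
    have hK1 : (1:ℝ) ≤ (k:ℝ) := by exact_mod_cast hk1
    have hK2 : (k:ℝ) ≤ 2*n := by exact_mod_cast hk2
    set p : ℝ := ((k:ℝ)-1)*π/n with hp
    set q : ℝ := (k:ℝ)*π/n with hq
    have hp0 : 0 ≤ p := by
      rw [hp]; exact div_nonneg (mul_nonneg (by linarith) Real.pi_pos.le) (by positivity)
    have hq2 : q ≤ 2*π := by
      rw [hq, div_le_iff₀ hNpos]; nlinarith
    have hpq : p ≤ q := by
      rw [hp, hq, div_le_div_iff_of_pos_right hNpos]; nlinarith
    have hsin : Continuous fun θ : ℝ => Real.sin ((n:ℝ)*θ) := by fun_prop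
    have i1 := betaCirc_mul_intervalIntegrable p q 0 p _ hsin
    have i2 := betaCirc_mul_intervalIntegrable p q p q _ hsin
    have i3 := betaCirc_mul_intervalIntegrable p q q (2*π) _ hsin
    rw [← intervalIntegral.integral_add_adjacent_intervals i1 (i2.trans i3),
      ← intervalIntegral.integral_add_adjacent_intervals i2 i3]
    have z1 : (∫ θ in (0:ℝ)..p, betaCirc p q θ * Real.sin ((n:ℝ)*θ)) = 0 := by
      have e : (∫ θ in (0:ℝ)..p, betaCirc p q θ * Real.sin ((n:ℝ)*θ))
          = ∫ θ in (0:ℝ)..p, (0:ℝ) := by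
        apply intervalIntegral.integral_congr
        intro θ hθ
        rw [Set.uIcc_of_le hp0] at hθ
        show betaCirc p q θ * Real.sin ((n:ℝ)*θ) = 0
        by_cases hm : θ ∈ Set.Icc p q
        · have hθp : θ = p := le_antisymm hθ.2 hm.1
          rw [hθp, betaCirc_left, zero_mul]
        · rw [betaCirc_notmem hm, zero_mul]
      rw [e, intervalIntegral.integral_zero]
    have z3 : (∫ θ in q..(2*π), betaCirc p q θ * Real.sin ((n:ℝ)*θ)) = 0 := by
      have e : (∫ θ in q..(2*π), betaCirc p q θ * Real.sin ((n:ℝ)*θ))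
          = ∫ θ in q..(2*π), (0:ℝ) := by
        apply intervalIntegral.integral_congr
        intro θ hθ
        rw [Set.uIcc_of_le hq2] at hθ
        show betaCirc p q θ * Real.sin ((n:ℝ)*θ) = 0
        by_cases hm : θ ∈ Set.Icc p q
        · have hθq : θ = q := le_antisymm hm.2 hθ.1
          rw [hθq, betaCirc_right, zero_mul]
        · rw [betaCirc_notmem hm, zero_mul]
      rw [e, intervalIntegral.integral_zero]
    rw [z1, z3]
    have hmid : (∫ θ in p..q, betaCirc p q θ * Real.sin ((n:ℝ)*θ))
        = (∫ θ in p..q,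
            2 * Real.sin ((θ - p)/2) * Real.sin ((q - θ)/2) * Real.sin ((n:ℝ)*θ)) / S := by
      rw [← intervalIntegral.integral_div]
      apply intervalIntegral.integral_congr
      intro θ hθ
      rw [Set.uIcc_of_le hpq] at hθ
      simp only [betaCirc, if_pos hθ]
      rw [show (q - p)/2 = π/(2*(n:ℝ)) from by rw [hp, hq]; field_simp; ring, ← hS]
      ring
    rw [hmid]
    rcases eq_or_ne n 1 with h1 | h1
    · subst h1
      have := per_interval_one k hk1
      simp only [Nat.cast_one, div_one] at *
      rw [show (∫ θ in p..q, 2 * Real.sin ((θ - p)/2) * Real.sin ((q - θ)/2) * Real.sin (1*θ))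
          = (∫ θ in (((k:ℝ)-1)*π)..((k:ℝ)*π), 2 * Real.sin ((θ - ((k:ℝ)-1)*π)/2)
            * Real.sin (((k:ℝ)*π - θ)/2) * Real.sin θ) from by
        rw [hp, hq]; simp only [div_one, one_mul]]
      rw [this, hv]
      simp
    · have hn2 : 2 ≤ n := by omega
      rw [hp, hq, per_interval_ge2 n k hn2 hk1, hv, if_neg h1]
      ring
  -- rewrite betaO using betaCirc on the interval
  have hcong : (∫ θ in (0:ℝ)..(2*π), betaO n θ * Real.sin ((n:ℝ) * θ))
      = ∫ θ in (0:ℝ)..(2*π), ∑ k ∈ Finset.Icc 1 (2*n),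
          Acoef n * ((-1:ℝ)^(k-1) * (betaCirc (((k:ℝ)-1)*π/n) ((k:ℝ)*π/n) θ
            * Real.sin ((n:ℝ)*θ))) := by
    apply intervalIntegral.integral_congr
    intro θ hθ
    rw [Set.uIcc_of_le (by linarith)] at hθ
    show betaO n θ * Real.sin ((n:ℝ)*θ) = _
    rw [betaO, show (∑ k ∈ Finset.Icc 1 (2*n),
          (-1:ℝ)^(k-1) * betaTilde (((k:ℝ)-1)*π/n) ((k:ℝ)*π/n) θ)
        = ∑ k ∈ Finset.Icc 1 (2*n),
          (-1:ℝ)^(k-1) * betaCirc (((k:ℝ)-1)*π/n) ((k:ℝ)*π/n) θ from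
      Finset.sum_congr rfl fun k hk => by
        obtain ⟨hk1, hk2⟩ := Finset.mem_Icc.mp hk
        have hK1 : (1:ℝ) ≤ (k:ℝ) := by exact_mod_cast hk1
        have hK2 : (k:ℝ) ≤ 2*(n:ℝ) := by exact_mod_cast hk2
        rw [betaTilde_eq_betaCirc
          (div_nonneg (mul_nonneg (by linarith) Real.pi_pos.le) (by positivity))
          (by rw [div_le_iff₀ hNpos]; nlinarith) hθ.1 hθ.2]]
    rw [Finset.mul_sum, Finset.sum_mul]
    exact Finset.sum_congr rfl fun k hk => by ring
  rw [hcong, intervalIntegral.integral_finset_sum (fun k hk =>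
    ((betaCirc_mul_intervalIntegrable _ _ 0 (2*π) _ (by fun_prop)).const_mul
      ((-1:ℝ)^(k-1))).const_mul (Acoef n))]
  simp only [intervalIntegral.integral_const_mul]
  have hsum2 : (∑ k ∈ Finset.Icc 1 (2*n), Acoef n * ((-1:ℝ)^(k-1)
        * ∫ θ in (0:ℝ)..(2*π), betaCirc (((k:ℝ)-1)*π/n) ((k:ℝ)*π/n) θ * Real.sin ((n:ℝ)*θ)))
      = ∑ _k ∈ Finset.Icc 1 (2*n), Acoef n * (v/S) := by
    refine Finset.sum_congr rfl fun k hk => ?_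
    rw [hkey k hk]
    have h2 : ((-1:ℝ))^(k-1) * (-1:ℝ)^(k-1) = 1 := by
      rw [← pow_add]; exact Even.neg_one_pow ⟨k-1, by ring⟩
    calc Acoef n * ((-1:ℝ)^(k-1) * ((-1:ℝ)^(k-1) * v / S))
        = Acoef n * (((-1:ℝ)^(k-1) * (-1:ℝ)^(k-1)) * v / S) := by ring
      _ = Acoef n * (v / S) := by rw [h2, one_mul]
  rw [hsum2, Finset.sum_const, Nat.card_Icc, nsmul_eq_mul]
  have hcard : ((2*n + 1 - 1 : ℕ) : ℝ) = 2*(n:ℝ) := by push_cast [Nat.add_sub_cancel]; ring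
  rw [hcard]
  rcases eq_or_ne n 1 with h1 | h1
  · subst h1
    rw [hv, hS, Acoef]
    norm_num
    field_simp
  · have hn2 : 2 ≤ n := by omega
    have hN2 : (2:ℝ) ≤ (n:ℝ) := by exact_mod_cast hn2
    have hcpos : 0 < Real.cos (π/(2*(n:ℝ))) := by
      apply Real.cos_pos_of_mem_Ioo
      constructor
      · have : 0 < π/(2*(n:ℝ)) := by positivity
        linarith
      · rw [div_lt_div_iff₀ (by positivity) (by norm_num)]
        nlinarith
    have hsq : (n:ℝ)^2 - 1 ≠ 0 := by nlinarith
    rw [hv, if_neg h1, hS, Acoef, if_neg h1, Real.tan_eq_sin_div_cos]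
    have hsin0 : Real.sin (π/(2*(n:ℝ))) ≠ 0 := by
      rw [hS] at hSpos; exact hSpos.ne'
    field_simp
    ring

lemma betaO_periodic (n : ℕ) :
    Function.Periodic (fun θ => betaO n θ * Real.sin ((n:ℝ)*θ)) (2*π) := by
  intro θ
  show betaO n (θ + 2*π) * Real.sin ((n:ℝ)*(θ + 2*π)) = betaO n θ * Real.sin ((n:ℝ)*θ)
  have h1 : betaO n (θ + 2*π) = betaO n θ := by
    rw [betaO, betaO]
    congr 1
    exact Finset.sum_congr rfl fun k _ => by
      congr 1
      exact betaTilde_periodic _ _ θ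
  have h2 : Real.sin ((n:ℝ)*(θ + 2*π)) = Real.sin ((n:ℝ)*θ) := by
    rw [show (n:ℝ)*(θ+2*π) = (n:ℝ)*θ + (n:ℕ) * (2*π) from by push_cast; ring,
      Real.sin_add_nat_mul_two_pi]
  rw [h1, h2]

lemma part2 (n : ℕ) (hn : 1 ≤ n) :
    (∫ θ in (0:ℝ)..(2*π), betaO n (θ + π/(2*(n:ℝ))) * Real.cos ((n:ℝ)*θ)) = 1/2 := by
  have hN1 : (1:ℝ) ≤ (n:ℝ) := by exact_mod_cast hn
  have hN0 : (n:ℝ) ≠ 0 := by linarith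
  have h1 : (∫ θ in (0:ℝ)..(2*π), betaO n (θ + π/(2*(n:ℝ))) * Real.cos ((n:ℝ)*θ))
      = ∫ θ in (0:ℝ)..(2*π), (fun φ => betaO n φ * Real.sin ((n:ℝ)*φ)) (θ + π/(2*(n:ℝ))) := by
    apply intervalIntegral.integral_congr
    intro θ _
    show betaO n (θ + π/(2*(n:ℝ))) * Real.cos ((n:ℝ)*θ)
        = betaO n (θ + π/(2*(n:ℝ))) * Real.sin ((n:ℝ)*(θ + π/(2*(n:ℝ))))
    congr 1
    rw [show (n:ℝ)*(θ + π/(2*(n:ℝ))) = (n:ℝ)*θ + π/2 from by field_simp,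
      Real.sin_add_pi_div_two]
  rw [h1, intervalIntegral.integral_comp_add_right
    (fun φ => betaO n φ * Real.sin ((n:ℝ)*φ)) (π/(2*(n:ℝ)))]
  have hper := (betaO_periodic n).intervalIntegral_add_eq (0 + π/(2*(n:ℝ))) 0
  rw [show (2*π + π/(2*(n:ℝ))) = 0 + π/(2*(n:ℝ)) + 2*π from by ring, hper,
    show (0:ℝ) + 2*π = 2*π from by ring]
  exact part1 n hn

end main


/-- The normalization of the approximate Fourier weight functions:
`∫₀^{2π} βₙ^{(o)}(θ) sin(nθ) dθ = 1/2` and `∫₀^{2π} βₙ^{(e)}(θ) cos(nθ) dθ = 1/2`,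
where `βₙ^{(e)}(θ) = βₙ^{(o)}(θ + π/(2n))`. -/
theorem stmt_5 (n : ℕ) (hn : 1 ≤ n) :
    (∫ θ in (0 : ℝ)..(2 * π), betaO n θ * Real.sin (n * θ)) = 1 / 2 ∧
    (∫ θ in (0 : ℝ)..(2 * π), betaO n (θ + π / (2 * n)) * Real.cos (n * θ)) = 1 / 2 := by
  exact ⟨part1 n hn, part2 n hn⟩
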